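/- Two sequential faulty type-1 SWAPs through a common routing qubit produce independent Pauli noise on the two computational qubits: let p : Fin 4 × Fin 4 → ℝ be nonnegative with Σ_{α,β} p(α,β) = 1. On 8×8 complex matrices (three qubit wires ordered wire1 ⊗ wire2 ⊗ wire3), let S₁₂ = SWAP ⊗ I₂ and S₂₃ = I₂ ⊗ SWAP, and define the noise channels E₁₂(X) = Σ_{α,β} p(α,β) (σ_α ⊗ σ_β ⊗ I₂) X (σ_α ⊗ σ_β ⊗ I₂) and E₂₃(X) = Σ_{α,β} p(α,β) (I₂ ⊗ σ_α ⊗ σ_β) X (I₂ ⊗ σ_α ⊗ σ_β). For any 2×2 complex matrices ρ_r, ρ₁, ρ₂ with Tr(ρ_r) = 1, let OUT = E₂₃(S₂₃ · E₁₂(S₁₂ · (ρ_r ⊗ ρ₁ ⊗ ρ₂) · S₁₂) · S₂₃). Then for every 4×4 complex matrix M, Tr[(M ⊗ I₂) · OUT] = Tr[M · (E'(ρ₁) ⊗ E'(ρ₂))], where E'(ρ) = Σ_α q_α σ_α ρ σ_α with marginal coefficients q_α = Σ_β p(α,β). That is, after tracing out the routing qubit, the two faulty SWAPs act as the product channel E'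 ⊗ E' on the two computational qubits. -/
import Mathlib


open Matrix Complex Kronecker

/-- The Pauli matrices σ₀ = I₂, σ₁ = X, σ₂ = Y, σ₃ = Z. -/
def pauli : Fin 4 → Matrix (Fin 2) (Fin 2) ℂ :=
  ![!![1,0; 0,1], !![0,1; 1,0], !![0,-I; I,0], !![1,0; 0,-1]]

/-- The 4×4 SWAP matrix. -/
def SWAPmat : Matrix (Fin 4) (Fin 4) ℂ :=
  !![1,0,0,0; 0,0,1,0; 0,1,0,0; 0,0,0,1]

/-- Lexicographic identification of `Fin 2 × Fin 2` with `Fin 4`. -/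
def e22 : Fin 2 × Fin 2 ≃ Fin 4 := finProdFinEquiv

/-- Lexicographic identification of `Fin 4 × Fin 2` with `Fin 8`. -/
def e42 : Fin 4 × Fin 2 ≃ Fin 8 := finProdFinEquiv

/-- Lexicographic identification of `Fin 2 × Fin 4` with `Fin 8`. -/
def e24 : Fin 2 × Fin 4 ≃ Fin 8 := finProdFinEquiv

/-- Kronecker product of two 2×2 matrices as a 4×4 matrix. -/
def kron4 (A B : Matrix (Fin 2) (Fin 2) ℂ) : Matrix (Fin 4) (Fin 4) ℂ :=
  Matrix.reindex e22 e22 (A ⊗ₖ B)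

/-- Kronecker product of a 4×4 matrix with a 2×2 matrix, as an 8×8 matrix. -/
def kron42 (A : Matrix (Fin 4) (Fin 4) ℂ) (B : Matrix (Fin 2) (Fin 2) ℂ) :
    Matrix (Fin 8) (Fin 8) ℂ :=
  Matrix.reindex e42 e42 (A ⊗ₖ B)

/-- Kronecker product of a 2×2 matrix with a 4×4 matrix, as an 8×8 matrix. -/
def kron24 (A : Matrix (Fin 2) (Fin 2) ℂ) (B : Matrix (Fin 4) (Fin 4) ℂ) :
    Matrix (Fin 8) (Fin 8) ℂ :=
  Matrix.reindex e24 e24 (A ⊗ₖ B)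

/-- SWAP on wires 1 and 2 (of three qubit wires). -/
def S12 : Matrix (Fin 8) (Fin 8) ℂ := kron42 SWAPmat 1

/-- SWAP on wires 2 and 3 (of three qubit wires). -/
def S23 : Matrix (Fin 8) (Fin 8) ℂ := kron24 1 SWAPmat

/-- Two-qubit Pauli noise channel acting on wires 1 and 2 of three qubit wires. -/
noncomputable def E12 (p : Fin 4 × Fin 4 → ℝ) (X : Matrix (Fin 8) (Fin 8) ℂ) :
    Matrix (Fin 8) (Fin 8) ℂ :=
  ∑ a : Fin 4, ∑ b : Fin 4, ((p (a, b) : ℝ) : ℂ) •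
    (kron42 (kron4 (pauli a) (pauli b)) 1 * X * kron42 (kron4 (pauli a) (pauli b)) 1)

/-- Two-qubit Pauli noise channel acting on wires 2 and 3 of three qubit wires. -/
noncomputable def E23 (p : Fin 4 × Fin 4 → ℝ) (X : Matrix (Fin 8) (Fin 8) ℂ) :
    Matrix (Fin 8) (Fin 8) ℂ :=
  ∑ a : Fin 4, ∑ b : Fin 4, ((p (a, b) : ℝ) : ℂ) •
    (kron24 1 (kron4 (pauli a) (pauli b)) * X * kron24 1 (kron4 (pauli a) (pauli b)))

/-- The single-qubit marginal Pauli channel `E'(ρ) = Σ_α (Σ_β p(α,β)) σ_α ρ σ_α`. -/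
noncomputable def Emarg (p : Fin 4 × Fin 4 → ℝ) (ρ : Matrix (Fin 2) (Fin 2) ℂ) :
    Matrix (Fin 2) (Fin 2) ℂ :=
  ∑ a : Fin 4, ((∑ b : Fin 4, p (a, b) : ℝ) : ℂ) • (pauli a * ρ * pauli a)


theorem kron4_apply (A B : Matrix (Fin 2) (Fin 2) ℂ) (i j : Fin 4) :
    kron4 A B i j = A (e22.symm i).1 (e22.symm j).1 * B (e22.symm i).2 (e22.symm j).2 := rfl
theorem kron42_apply (A : Matrix (Fin 4) (Fin 4) ℂ) (B : Matrix (Fin 2) (Fin 2) ℂ) (i j : Fin 8) :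
    kron42 A B i j = A (e42.symm i).1 (e42.symm j).1 * B (e42.symm i).2 (e42.symm j).2 := rfl
theorem kron24_apply (A : Matrix (Fin 2) (Fin 2) ℂ) (B : Matrix (Fin 4) (Fin 4) ℂ) (i j : Fin 8) :
    kron24 A B i j = A (e24.symm i).1 (e24.symm j).1 * B (e24.symm i).2 (e24.symm j).2 := rfl

theorem pauli_sq (a : Fin 4) : pauli a * pauli a = 1 := by
  fin_cases a <;> ext i j <;> fin_cases i <;> fin_cases j <;>
    simp [pauli, Matrix.mul_apply, Fin.sum_univ_two, Matrix.one_apply]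

theorem kron4_mul (A B C D : Matrix (Fin 2) (Fin 2) ℂ) :
    kron4 A B * kron4 C D = kron4 (A * C) (B * D) := by
  simp only [kron4, reindex_apply, Matrix.submatrix_mul_equiv, mul_kronecker_mul]
theorem kron42_mul (A C : Matrix (Fin 4) (Fin 4) ℂ) (B D : Matrix (Fin 2) (Fin 2) ℂ) :
    kron42 A B * kron42 C D = kron42 (A * C) (B * D) := by
  simp only [kron42, reindex_apply, Matrix.submatrix_mul_equiv, mul_kronecker_mul]
theorem kron24_mul (A C : Matrix (Fin 2) (Fin 2) ℂ) (B D : Matrix (Fin 4) (Fin 4) ℂ) :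
    kron24 A B * kron24 C D = kron24 (A * C) (B * D) := by
  simp only [kron24, reindex_apply, Matrix.submatrix_mul_equiv, mul_kronecker_mul]

theorem e22_swap : ∀ i : Fin 4, e22.symm (Equiv.swap 1 2 i) = Prod.swap (e22.symm i) := by decide

theorem SWAPmat_eq : SWAPmat = ((Equiv.swap (1:Fin 4) 2).toPEquiv.toMatrix : Matrix (Fin 4) (Fin 4) ℂ) := by
  ext i j; fin_cases i <;> fin_cases j <;> rfl

theorem swap_conj (A B : Matrix (Fin 2) (Fin 2) ℂ) :
    SWAPmat * kron4 A B * SWAPmat = kron4 B A := by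
  rw [SWAPmat_eq, PEquiv.toMatrix_toPEquiv_mul, PEquiv.mul_toMatrix_toPEquiv]
  ext i j
  simp only [Matrix.submatrix_apply, id, Equiv.symm_swap, kron4_apply, e22_swap]
  exact mul_comm _ _

theorem idx1 : ∀ i : Fin 8, (e22.symm (e42.symm i).1).1 = (e24.symm i).1 := by decide
theorem idx2 : ∀ i : Fin 8, (e22.symm (e42.symm i).1).2 = (e22.symm (e24.symm i).2).1 := by decide
theorem idx3 : ∀ i : Fin 8, (e42.symm i).2 = (e22.symm (e24.symm i).2).2 := by decide

theorem kron_assoc (A B C : Matrix (Fin 2) (Fin 2) ℂ) :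
    kron42 (kron4 A B) C = kron24 A (kron4 B C) := by
  ext i j
  rw [kron42_apply, kron24_apply, kron4_apply, kron4_apply, idx1, idx2, idx3, idx1 j, idx2 j, idx3 j,
    mul_assoc]

theorem trace_submatrix_equiv' {n m : Type*} [Fintype n] [Fintype m] (e : n ≃ m)
    (M : Matrix m m ℂ) : (M.submatrix e e).trace = M.trace := by
  simp only [Matrix.trace, Matrix.diag, Matrix.submatrix_apply]
  exact Equiv.sum_comp e (fun j => M j j)

theorem trace_kron42 (A : Matrix (Fin 4) (Fin 4) ℂ) (B : Matrix (Fin 2) (Fin 2) ℂ) :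
    (kron42 A B).trace = A.trace * B.trace := by
  rw [kron42, reindex_apply, trace_submatrix_equiv', trace_kronecker]
theorem trace_kron4 (A B : Matrix (Fin 2) (Fin 2) ℂ) :
    (kron4 A B).trace = A.trace * B.trace := by
  rw [kron4, reindex_apply, trace_submatrix_equiv', trace_kronecker]

theorem trace_pauli_conj (d : Fin 4) (X : Matrix (Fin 2) (Fin 2) ℂ) :
    (pauli d * X * pauli d).trace = X.trace := by
  rw [Matrix.trace_mul_cycle, pauli_sq, one_mul]


theorem kron4_sum_left {ι : Type*} (s : Finset ι) (f : ι → Matrix (Fin 2) (Fin 2) ℂ)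
    (B : Matrix (Fin 2) (Fin 2) ℂ) : kron4 (∑ i ∈ s, f i) B = ∑ i ∈ s, kron4 (f i) B := by
  ext i j; simp [kron4_apply, Matrix.sum_apply, Finset.sum_mul]
theorem kron4_sum_right {ι : Type*} (s : Finset ι) (A : Matrix (Fin 2) (Fin 2) ℂ)
    (f : ι → Matrix (Fin 2) (Fin 2) ℂ) : kron4 A (∑ i ∈ s, f i) = ∑ i ∈ s, kron4 A (f i) := by
  ext i j; simp [kron4_apply, Matrix.sum_apply, Finset.mul_sum]
theorem kron4_smul_left (c : ℂ) (A B : Matrix (Fin 2) (Fin 2) ℂ) :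
    kron4 (c • A) B = c • kron4 A B := by
  ext i j; simp only [Matrix.smul_apply, kron4_apply, smul_eq_mul]; ring
theorem kron4_smul_right (c : ℂ) (A B : Matrix (Fin 2) (Fin 2) ℂ) :
    kron4 A (c • B) = c • kron4 A B := by
  ext i j; simp only [Matrix.smul_apply, kron4_apply, smul_eq_mul]; ring

theorem hS12conj (ρr ρ1 ρ2 : Matrix (Fin 2) (Fin 2) ℂ) :
    S12 * kron24 ρr (kron4 ρ1 ρ2) * S12 = kron42 (kron4 ρ1 ρr) ρ2 := by
  rw [← kron_assoc, S12, kron42_mul, kron42_mul, one_mul, mul_one, swap_conj]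
theorem hS23conj (u v w : Matrix (Fin 2) (Fin 2) ℂ) :
    S23 * kron42 (kron4 u v) w * S23 = kron42 (kron4 u w) v := by
  rw [kron_assoc, S23, kron24_mul, kron24_mul, one_mul, mul_one, swap_conj, ← kron_assoc]


/-- Two sequential faulty type-1 SWAPs through a common routing qubit act, after
    tracing out the routing qubit, as the product channel `E' ⊗ E'` of independent
    Pauli channels on the two computational qubits. -/
theorem faulty_type1_swaps_give_independent_noise
    (p : Fin 4 × Fin 4 → ℝ) (hp : ∀ x, 0 ≤ p x) (hsum : ∑ x : Fin 4 × Fin 4, p x = 1)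
    (ρr ρ1 ρ2 : Matrix (Fin 2) (Fin 2) ℂ) (hr : ρr.trace = 1) :
    ∀ M : Matrix (Fin 4) (Fin 4) ℂ,
      (kron42 M 1 *
        E23 p (S23 * E12 p (S12 * kron24 ρr (kron4 ρ1 ρ2) * S12) * S23)).trace
      = (M * kron4 (Emarg p ρ1) (Emarg p ρ2)).trace := by
  intro M
  set T : Fin 4 → Fin 4 → ℂ := fun a c =>
    (M * kron4 (pauli a * ρ1 * pauli a) (pauli c * ρ2 * pauli c)).trace with hT
  have key : ∀ a b c d : Fin 4,
      (kron42 M 1 * (kron24 1 (kron4 (pauli c) (pauli d)) *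
        (S23 * (kron42 (kron4 (pauli a) (pauli b)) 1 *
          (S12 * kron24 ρr (kron4 ρ1 ρ2) * S12) *
          kron42 (kron4 (pauli a) (pauli b)) 1) * S23) *
        kron24 1 (kron4 (pauli c) (pauli d)))).trace = T a c := by
    intro a b c d
    rw [hS12conj, kron42_mul, kron42_mul, one_mul, mul_one, kron4_mul, kron4_mul,
      hS23conj, kron_assoc, kron24_mul, kron24_mul, one_mul, mul_one, kron4_mul, kron4_mul,
      ← kron_assoc, kron42_mul, one_mul, trace_kron42, trace_pauli_conj,
      trace_pauli_conj, hr, mul_one, hT]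
  calc (kron42 M 1 *
        E23 p (S23 * E12 p (S12 * kron24 ρr (kron4 ρ1 ρ2) * S12) * S23)).trace
      = ∑ c : Fin 4, ∑ d : Fin 4, ∑ a : Fin 4, ∑ b : Fin 4,
          ((p (c, d) : ℝ) : ℂ) * (((p (a, b) : ℝ) : ℂ) * T a c) := by
        simp only [E12, E23, Finset.mul_sum, Finset.sum_mul, smul_mul_assoc, mul_smul_comm,
          Matrix.trace_sum, Matrix.trace_smul, smul_eq_mul]
        refine Finset.sum_congr rfl fun c _ => Finset.sum_congr rfl fun d _ =>
          Finset.sum_congr rfl fun a _ => Finset.sum_congr rfl fun b _ => ?_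
        rw [key a b c d]
    _ = ∑ a : Fin 4, ∑ c : Fin 4,
          ((∑ b : Fin 4, (p (a, b) : ℂ)) * (∑ d : Fin 4, (p (c, d) : ℂ))) * T a c := by
        rw [show (∑ c : Fin 4, ∑ d : Fin 4, ∑ a : Fin 4, ∑ b : Fin 4,
            ((p (c, d) : ℝ) : ℂ) * (((p (a, b) : ℝ) : ℂ) * T a c))
          = ∑ c : Fin 4, ∑ a : Fin 4,
            ((∑ b : Fin 4, (p (a, b) : ℂ)) * (∑ d : Fin 4, (p (c, d) : ℂ))) * T a c from
          Finset.sum_congr rfl fun c _ => by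
            rw [Finset.sum_comm]
            refine Finset.sum_congr rfl fun a _ => ?_
            simp only [← Finset.mul_sum, ← Finset.sum_mul]
            ring]
        exact Finset.sum_comm
    _ = (M * kron4 (Emarg p ρ1) (Emarg p ρ2)).trace := by
        simp only [Emarg, kron4_sum_left, kron4_sum_right, kron4_smul_left, kron4_smul_right,
          Finset.mul_sum, Matrix.mul_sum, Matrix.mul_smul, Matrix.trace_sum, Matrix.trace_smul,
          smul_eq_mul, Complex.ofReal_sum]
        rw [Finset.sum_comm]
        refine Finset.sum_congr rfl fun a _ => Finset.sum_congr rfl fun c _ => ?_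
        rw [hT]; push_cast; simp only [← Finset.mul_sum, ← Finset.sum_mul]; ring
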